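/- On the unit sphere S^n = {x ∈ R^{n+1} : ‖x‖ = 1} with geodesic distance d_g(y, y') = arccos(⟨y, y'⟩), the Laplacian-type kernel κ_L(y, y') = exp(-γ d_g(y, y')) is a positive definite kernel for every γ > 0. -/

import Mathlib

/-!
Since `arccos t = π / 2 - arcsin t`, the kernel is `exp (-γπ/2) · exp (γ · arcsin ⟪y, y'⟫)`.
On `(-1, 1)` both `exp` and `arcsin` are sums of power series with nonnegative coefficients, and
by the Schur product theorem such functions, applied entrywise, preserve positive
semidefiniteness; apply them to the Gram matrix of the points. Entries `±1` (the diagonal, for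
instance) lie outside the domain of the series, so the Gram matrix is first scaled by `r < 1`
and then `r → 1`.
-/

open Topology Set

namespace Real

theorem choose_half_add_sub_one_nonneg (k : ℕ) : 0 ≤ Ring.choose ((1 / 2 : ℝ) + k - 1) k := by
  have h : k.factorial • Ring.choose ((1 / 2 : ℝ) + k - 1) k =
      (ascPochhammer ℝ k).eval (1 / 2) := by
    rw [Ring.choose, show (1 / 2 : ℝ) + k - 1 - k + 1 = 1 / 2 by ring,
      Ring.factorial_nsmul_multichoose_eq_ascPochhammer, Polynomial.ascPochhammer_smeval_eq_eval]
  rw [nsmul_eq_mul] at h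
  have hpos := ascPochhammer_pos k (1 / 2 : ℝ) (by norm_num)
  rw [← h] at hpos
  exact (pos_of_mul_pos_right hpos (by positivity)).le

theorem hasSum_inv_sqrt_one_sub_sq {x : ℝ} (hx : |x| < 1) :
    HasSum (fun k : ℕ => Ring.choose ((1 / 2 : ℝ) + k - 1) k * x ^ (2 * k)) (√(1 - x ^ 2))⁻¹ := by
  have hx2 : x ^ 2 ∈ Metric.eball (0 : ℝ) 1 := by
    rw [Metric.mem_eball, edist_zero_right, ← ofReal_norm, ENNReal.ofReal_lt_one, norm_pow,
      norm_eq_abs]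
    exact pow_lt_one₀ (abs_nonneg x) hx two_ne_zero
  have h := (one_div_one_sub_rpow_hasFPowerSeriesOnBall_zero (1 / 2)).hasSum hx2
  simp only [FormalMultilinearSeries.ofScalars_apply_eq, smul_eq_mul, zero_add] at h
  rw [sqrt_eq_rpow, ← one_div]
  simpa only [← pow_mul, mul_comm 2] using h

/-- The coefficients of `(1 - x) ^ (-1 / 2)` are `Ring.choose (1 / 2 + k - 1) k`; integrating
`(1 - x ^ 2) ^ (-1 / 2)` termwise divides them by `2 * k + 1`. -/
noncomputable def arcsinCoeff (k : ℕ) : ℝ := Ring.choose ((1 / 2 : ℝ) + k - 1) k / (2 * k + 1)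

theorem arcsinCoeff_nonneg (k : ℕ) : 0 ≤ arcsinCoeff k :=
  div_nonneg (choose_half_add_sub_one_nonneg k) (by positivity)

theorem hasDerivAt_arcsinCoeff_mul_pow (k : ℕ) (x : ℝ) :
    HasDerivAt (fun z => arcsinCoeff k * z ^ (2 * k + 1))
      (Ring.choose ((1 / 2 : ℝ) + k - 1) k * x ^ (2 * k)) x := by
  have h := (hasDerivAt_pow (2 * k + 1) x).const_mul (arcsinCoeff k)
  have hcoeff : arcsinCoeff k * ((2 * k + 1 : ℕ) : ℝ) = Ring.choose ((1 / 2 : ℝ) + k - 1) k := by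
    unfold arcsinCoeff
    push_cast
    field_simp
  rwa [Nat.add_sub_cancel, ← mul_assoc, hcoeff] at h

theorem abs_arcsinCoeff_mul_pow_le {x : ℝ} (hx : |x| ≤ 1) (k : ℕ) :
    |arcsinCoeff k * x ^ (2 * k + 1)| ≤ Ring.choose ((1 / 2 : ℝ) + k - 1) k * |x| ^ (2 * k) := by
  have hc := choose_half_add_sub_one_nonneg k
  rw [abs_mul, abs_of_nonneg (arcsinCoeff_nonneg k), abs_pow, pow_succ, arcsinCoeff]
  gcongr
  · exact div_le_self hc (by linarith [(Nat.cast_nonneg k : (0 : ℝ) ≤ k)])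
  · exact mul_le_of_le_one_right (by positivity) hx

theorem summable_arcsinCoeff_mul_pow {x : ℝ} (hx : |x| < 1) :
    Summable fun k => arcsinCoeff k * x ^ (2 * k + 1) := by
  refine .of_norm_bounded (hasSum_inv_sqrt_one_sub_sq (x := |x|) ?_).summable
    (abs_arcsinCoeff_mul_pow_le hx.le)
  rwa [abs_abs]

theorem hasDerivAt_tsum_arcsinCoeff_mul_pow {x : ℝ} (hx : |x| < 1) :
    HasDerivAt (fun z => ∑' k, arcsinCoeff k * z ^ (2 * k + 1)) (√(1 - x ^ 2))⁻¹ x := by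
  obtain ⟨r, hxr, hr1⟩ := exists_between hx
  have hr : |r| < 1 := by rwa [abs_of_pos ((abs_nonneg x).trans_lt hxr)]
  rw [← (hasSum_inv_sqrt_one_sub_sq hx).tsum_eq]
  refine hasDerivAt_tsum_of_isPreconnected (hasSum_inv_sqrt_one_sub_sq hr).summable
    Metric.isOpen_ball (convex_ball 0 r).isPreconnected
    (fun k y _ => hasDerivAt_arcsinCoeff_mul_pow k y) (fun k y hy => ?_)
    (Metric.mem_ball_self ((abs_nonneg x).trans_lt hxr)) (by simp) (mem_ball_zero_iff.2 hxr)
  rw [mem_ball_zero_iff, norm_eq_abs] at hy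
  rw [norm_mul, norm_pow, norm_eq_abs, abs_of_nonneg (choose_half_add_sub_one_nonneg k),
    norm_eq_abs]
  gcongr
  exact choose_half_add_sub_one_nonneg k

theorem hasSum_arcsin {x : ℝ} (hx : |x| < 1) :
    HasSum (fun k => arcsinCoeff k * x ^ (2 * k + 1)) (arcsin x) := by
  rw [(summable_arcsinCoeff_mul_pow hx).hasSum_iff]
  have hderiv : ∀ z ∈ Ioo (-1 : ℝ) 1,
      HasDerivAt (fun z => ∑' k, arcsinCoeff k * z ^ (2 * k + 1) - arcsin z) 0 z := by
    intro z hz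
    simpa using (hasDerivAt_tsum_arcsinCoeff_mul_pow (abs_lt.2 hz)).fun_sub
      (hasDerivAt_arcsin hz.1.ne' hz.2.ne)
  have hconst := isOpen_Ioo.is_const_of_deriv_eq_zero isPreconnected_Ioo
    (fun z hz => (hderiv z hz).differentiableAt.differentiableWithinAt)
    (fun z hz => (hderiv z hz).deriv) (abs_lt.1 hx) (by norm_num : (0 : ℝ) ∈ Ioo (-1) 1)
  simpa [sub_eq_zero] using hconst

theorem exp_neg_mul_arccos (γ t : ℝ) :
    exp (-γ * arccos t) = exp (-(γ * π / 2)) * exp (γ * arcsin t) := by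
  rw [arccos_eq_pi_div_two_sub_arcsin, ← exp_add]
  ring_nf

end Real

namespace Matrix

variable {ι : Type*} [Fintype ι]

theorem posSemidef_iff_sum_mul_mul_nonneg {A : Matrix ι ι ℝ} :
    A.PosSemidef ↔ A.IsHermitian ∧ ∀ c : ι → ℝ, 0 ≤ ∑ i, ∑ j, c i * c j * A i j := by
  rw [posSemidef_iff_dotProduct_mulVec]
  refine and_congr_right fun _ => forall_congr' fun c => ?_
  simp only [star_trivial, dotProduct, mulVec, Finset.mul_sum]
  exact iff_of_eq <| congrArg _ <|
    Finset.sum_congr rfl fun i _ => Finset.sum_congr rfl fun j _ => by ring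

theorem PosSemidef.map_pow {A : Matrix ι ι ℝ} (hA : A.PosSemidef) (n : ℕ) :
    (A.map (· ^ n)).PosSemidef := by
  induction n with
  | zero =>
    convert posSemidef_vecMulVec_self_star (fun _ : ι => (1 : ℝ))
    ext i j
    simp [vecMulVec]
  | succ n ih =>
    have h : A.map (· ^ (n + 1)) = A.map (· ^ n) ⊙ A := by
      ext i j
      simp [pow_succ]
    rw [h]
    exact ih.hadamard hA

theorem PosSemidef.map_of_hasSum {A : Matrix ι ι ℝ} (hA : A.PosSemidef) {κ : Type*}
    {a : κ → ℝ} (ha : ∀ k, 0 ≤ a k) (p : κ → ℕ) {f : ℝ → ℝ}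
    (hf : ∀ i j, HasSum (fun k => a k * A i j ^ p k) (f (A i j))) :
    (A.map f).PosSemidef := by
  refine posSemidef_iff_sum_mul_mul_nonneg.2 ⟨hA.isHermitian.map f fun _ => rfl, fun c => ?_⟩
  have hsum : HasSum (fun k => a k * ∑ i, ∑ j, c i * c j * A i j ^ p k)
      (∑ i, ∑ j, c i * c j * f (A i j)) := by
    simp only [Finset.mul_sum]
    refine hasSum_sum fun i _ => hasSum_sum fun j _ => ?_
    simpa only [mul_left_comm (a _)] using (hf i j).mul_left (c i * c j)
  exact hsum.nonneg fun k => mul_nonneg (ha k)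
    ((posSemidef_iff_sum_mul_mul_nonneg.1 (hA.map_pow (p k))).2 c)

theorem PosSemidef.map_exp {A : Matrix ι ι ℝ} (hA : A.PosSemidef) :
    (A.map Real.exp).PosSemidef :=
  hA.map_of_hasSum (a := fun n => (n.factorial : ℝ)⁻¹) (fun n => by positivity) id fun i j => by
    simpa [Real.exp_eq_exp_ℝ] using NormedSpace.exp_series_hasSum_exp' (𝕂 := ℝ) (A i j)

theorem PosSemidef.map_arcsin {A : Matrix ι ι ℝ} (hA : A.PosSemidef) (hA1 : ∀ i j, |A i j| < 1) :
    (A.map Real.arcsin).PosSemidef :=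
  hA.map_of_hasSum Real.arcsinCoeff_nonneg (fun k => 2 * k + 1) fun i j =>
    Real.hasSum_arcsin (hA1 i j)

theorem PosSemidef.map_exp_mul_arcsin {A : Matrix ι ι ℝ} (hA : A.PosSemidef)
    (hA1 : ∀ i j, |A i j| ≤ 1) {γ : ℝ} (hγ : 0 ≤ γ) :
    (A.map fun t => Real.exp (γ * Real.arcsin t)).PosSemidef := by
  refine posSemidef_iff_sum_mul_mul_nonneg.2 ⟨hA.isHermitian.map _ fun _ => rfl, fun c => ?_⟩
  have hscaled : ∀ r ∈ Ico (0 : ℝ) 1,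
      0 ≤ ∑ i, ∑ j, c i * c j * Real.exp (γ * Real.arcsin (r * A i j)) := by
    intro r hr
    have hrA : ∀ i j, |(r • A) i j| < 1 := fun i j => by
      rw [smul_apply, smul_eq_mul, abs_mul, abs_of_nonneg hr.1]
      exact (mul_le_of_le_one_right hr.1 (hA1 i j)).trans_lt hr.2
    exact (posSemidef_iff_sum_mul_mul_nonneg.1
      (((hA.smul hr.1).map_arcsin hrA).smul hγ).map_exp).2 c
  have hcont : Continuous fun r : ℝ =>
      ∑ i, ∑ j, c i * c j * Real.exp (γ * Real.arcsin (r * A i j)) := by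
    fun_prop
  refine ge_of_tendsto (x := 𝓝[<] 1)
    ((hcont.tendsto' 1 _ (by simp)).mono_left nhdsWithin_le_nhds) ?_
  filter_upwards [Ico_mem_nhdsLT (zero_lt_one' ℝ)] with r hr using hscaled r hr

end Matrix

open scoped RealInnerProductSpace

/-- Proposition 4. On the unit sphere `S^n ⊆ ℝ^{n+1}` with geodesic
distance `d_g(y,y') = arccos⟪y,y'⟫`, the Laplacian-type kernel
`κ_L(y,y') = exp(-γ d_g(y,y'))` is positive definite for every `γ > 0`: it is symmetric
and all its finite quadratic forms are nonnegative. -/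
theorem sphere_laplacian_kernel_posdef (n : ℕ) (γ : ℝ) (hγ : 0 < γ) :
    (∀ y y' : Metric.sphere (0 : EuclideanSpace ℝ (Fin (n + 1))) 1,
        Real.exp (-γ * Real.arccos ⟪(y : EuclideanSpace ℝ (Fin (n + 1))), (y' : EuclideanSpace ℝ (Fin (n + 1)))⟫)
          = Real.exp (-γ * Real.arccos ⟪(y' : EuclideanSpace ℝ (Fin (n + 1))), (y : EuclideanSpace ℝ (Fin (n + 1)))⟫)) ∧
      ∀ (m : ℕ) (y : Fin m → Metric.sphere (0 : EuclideanSpace ℝ (Fin (n + 1))) 1)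
        (c : Fin m → ℝ),
        0 ≤ ∑ i, ∑ j, c i * c j *
          Real.exp (-γ * Real.arccos ⟪(y i : EuclideanSpace ℝ (Fin (n + 1))), (y j : EuclideanSpace ℝ (Fin (n + 1)))⟫) := by
  refine ⟨fun y y' => by rw [real_inner_comm], fun m y c => ?_⟩
  have hgram : ∀ i j, |Matrix.gram ℝ (fun i => (y i : EuclideanSpace ℝ (Fin (n + 1)))) i j| ≤ 1 :=
    fun i j => by
      simpa [norm_eq_of_mem_sphere] using
        abs_real_inner_le_norm (y i : EuclideanSpace ℝ (Fin (n + 1))) (y j)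
  have hK := ((Matrix.posSemidef_gram ℝ _).map_exp_mul_arcsin hgram hγ.le).smul
    (Real.exp_pos (-(γ * Real.pi / 2))).le
  convert (Matrix.posSemidef_iff_sum_mul_mul_nonneg.1 hK).2 c using 4 with i _ j _
  rw [Real.exp_neg_mul_arccos]
  rfl
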